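/- Let k ≥ 1. The set W_even = {x ∈ X : the number of coordinates of x equal to +1 is even} is a set of uniqueness for (B^k_{k−1})_+, and every set of uniqueness for (B^k_{k−1})_+ has cardinality at least 2^{k−1}; consequently u(k,k−1) = 2^{k−1}. -/
import Mathlib


/-- Number of coordinates of `x ∈ {−1,+1}^k` (encoded as `Fin k → Bool`, `true ↔ +1`)
equal to `+1`. -/
def PosCount {k : ℕ} (x : Fin k → Bool) : ℕ :=
  (Finset.univ.filter fun i => x i = true).card

/-- Walsh function `w_L(x) = ∏_{j ∈ L} x_j` on `{−1,+1}^k`, `true ↔ +1`. -/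
noncomputable def Walsh {k : ℕ} (L : Finset (Fin k)) : (Fin k → Bool) → ℝ :=
  fun x => ∏ j ∈ L, (if x j then (1 : ℝ) else -1)

/-- `B^k_q`: the linear span of the Walsh functions `w_L` with `|L| ≤ q`. -/
noncomputable def BSpace (k q : ℕ) : Submodule ℝ ((Fin k → Bool) → ℝ) :=
  Submodule.span ℝ { f | ∃ L : Finset (Fin k), L.card ≤ q ∧ f = Walsh L }

/-- `(B^k_q)_+`: the nonnegative cone of `B^k_q`. -/
noncomputable def BPlus (k q : ℕ) : Set ((Fin k → Bool) → ℝ) :=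
  { φ | φ ∈ BSpace k q ∧ ∀ x, 0 ≤ φ x }

/-- `U` is a set of uniqueness for the class `C`. -/
def IsUniqSet {k : ℕ} (C : Set ((Fin k → Bool) → ℝ)) (U : Set (Fin k → Bool)) : Prop :=
  ∀ φ ∈ C, (∀ x ∈ U, φ x = 0) → φ = 0

/-- `u(k,q)`: minimal cardinality of a set of uniqueness for `(B^k_q)_+`. -/
noncomputable def uMin (k q : ℕ) : ℕ :=
  sInf { n | ∃ U : Set (Fin k → Bool), U.ncard = n ∧ IsUniqSet (BPlus k q) U }

/-- Level set `W_D`. -/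
def LevelSet (k : ℕ) (D : Set ℕ) : Set (Fin k → Bool) :=
  { x | PosCount x ∈ D }

/-- Subcube of `{−1,+1}^k` obtained by fixing the coordinates in `F` to the signs `ε`. -/
def Subcube {k : ℕ} (F : Finset (Fin k)) (ε : Fin k → Bool) : Set (Fin k → Bool) :=
  { x | ∀ i ∈ F, x i = ε i }

/-- `g(k,q)`: minimal cardinality of a subset of `{−1,+1}^k` meeting every `(k−q)`-subcube. -/
noncomputable def gMin (k q : ℕ) : ℕ :=
  sInf { n | ∃ A : Set (Fin k → Bool), A.ncard = n ∧
    ∀ (F : Finset (Fin k)) (ε : Fin k → Bool), F.card = q → (A ∩ Subcube F ε).Nonempty }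

/-- Binomial coefficient `C(n,r)` for integer `r`, with `C(n,r) = 0` for `r < 0` or `r > n`. -/
def Cb (n : ℕ) (r : ℤ) : ℕ := if r < 0 then 0 else n.choose r.toNat

section Aux

open Finset

variable {k : ℕ}

private lemma walsh_mul_self (L : Finset (Fin k)) (x : Fin k → Bool) :
    Walsh L x * Walsh L x = 1 := by
  unfold Walsh
  rw [← Finset.prod_mul_distrib]
  refine Finset.prod_eq_one fun j _ => ?_
  cases x j <;> norm_num

private lemma walsh_mul_univ (L : Finset (Fin k)) (x : Fin k → Bool) :
    Walsh L x * Walsh Finset.univ x = Walsh (Finset.univ \ L) x := by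
  have h : Walsh (Finset.univ \ L) x * Walsh L x = Walsh Finset.univ x := by
    unfold Walsh
    exact Finset.prod_sdiff (Finset.subset_univ L)
  rw [← h, ← mul_assoc, mul_comm (Walsh L x), mul_assoc, walsh_mul_self, mul_one]

private lemma sum_walsh_eq_zero {M : Finset (Fin k)} (hM : M.Nonempty) :
    ∑ x : Fin k → Bool, Walsh M x = 0 := by
  have : ∀ x : Fin k → Bool, Walsh M x =
      ∏ j : Fin k, (if j ∈ M then (if x j then (1:ℝ) else -1) else 1) := by
    intro x
    rw [Finset.prod_ite_mem Finset.univ M, Finset.univ_inter]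
    rfl
  simp_rw [this]
  rw [← Fintype.prod_sum (fun j (b : Bool) => if j ∈ M then (if b then (1:ℝ) else -1) else 1)]
  obtain ⟨j0, hj0⟩ := hM
  apply Finset.prod_eq_zero (Finset.mem_univ j0)
  simp [hj0]

private lemma sum_mul_walsh_univ (hk : 1 ≤ k) {φ : (Fin k → Bool) → ℝ}
    (hφ : φ ∈ BSpace k (k - 1)) :
    ∑ x : Fin k → Bool, φ x * Walsh Finset.univ x = 0 := by
  induction hφ using Submodule.span_induction with
  | mem f hf =>
    obtain ⟨L, hL, rfl⟩ := hf
    simp_rw [walsh_mul_univ]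
    apply sum_walsh_eq_zero
    rw [Finset.sdiff_nonempty]
    intro hsub
    have := Finset.card_le_card hsub
    rw [Finset.card_univ, Fintype.card_fin] at this
    omega
  | zero => simp
  | add f g _ _ hf hg =>
    simp only [Pi.add_apply, add_mul, Finset.sum_add_distrib, hf, hg, add_zero]
  | smul c f _ hf =>
    simp only [Pi.smul_apply, smul_eq_mul, mul_assoc, ← Finset.mul_sum, hf, mul_zero]

private lemma card_filter_half (i0 : Fin k) (p : (Fin k → Bool) → Prop) [DecidablePred p]
    (hp : ∀ x, p (Function.update x i0 (!x i0)) ↔ ¬ p x) :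
    (Finset.univ.filter p).card = 2 ^ (k - 1) := by
  classical
  set fl : (Fin k → Bool) → (Fin k → Bool) := fun x => Function.update x i0 (!x i0) with hfl
  have hinv : ∀ x, fl (fl x) = x := by
    intro x
    funext j
    by_cases h : j = i0
    · subst h; simp [fl, Function.update_self]
    · simp [fl, Function.update_of_ne h]
  have hcard : (Finset.univ.filter p).card = (Finset.univ.filter fun x => ¬ p x).card := by
    apply Finset.card_bij' (fun x _ => fl x) (fun x _ => fl x)
    · intro a ha; simp only [Finset.mem_filter, Finset.mem_univ, true_and] at ha ⊢
      rw [hp]; exact not_not.mpr ha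
    · intro a ha; simp only [Finset.mem_filter, Finset.mem_univ, true_and] at ha ⊢
      rw [← hinv a] at ha; rw [hp] at ha; exact not_not.mp ha
    · intro a _; exact hinv a
    · intro a _; exact hinv a
  have htot : (Finset.univ.filter p).card + (Finset.univ.filter fun x => ¬ p x).card = 2 ^ k := by
    rw [Finset.card_filter_add_card_filter_not]
    simp [Finset.card_univ]
  have hk : 1 ≤ k := Nat.one_le_iff_ne_zero.mpr (by rintro rfl; exact i0.elim0)
  have : 2 ^ k = 2 * 2 ^ (k - 1) := by
    rw [← pow_succ']
    congr 1
    omega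
  omega

private lemma posCount_flip (i0 : Fin k) (x : Fin k → Bool) :
    Even (PosCount (Function.update x i0 (!x i0))) ↔ ¬ Even (PosCount x) := by
  classical
  unfold PosCount
  have hset : (Finset.univ.filter fun i => Function.update x i0 (!x i0) i = true)
      = if x i0 then (Finset.univ.filter fun i => x i = true).erase i0
        else insert i0 (Finset.univ.filter fun i => x i = true) := by
    ext j
    by_cases h : j = i0
    · subst h
      cases hx : x j <;> simp [Function.update_self, hx]
    · cases hx : x i0 <;>
        simp [Function.update_of_ne h, hx, h, Finset.mem_erase, Finset.mem_insert]
  rw [hset]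
  by_cases hx : x i0 = true
  · rw [if_pos hx]
    have hmem : i0 ∈ (Finset.univ.filter fun i => x i = true) := by simp [hx]
    have h1 : 1 ≤ (Finset.univ.filter fun i => x i = true).card :=
      Finset.card_pos.mpr ⟨i0, hmem⟩
    rw [Finset.card_erase_of_mem hmem]
    rw [Nat.even_sub h1]
    simp [Nat.not_even_iff_odd, Nat.odd_iff, Nat.even_iff]
  · rw [if_neg (by simpa using hx)]
    have hmem : i0 ∉ (Finset.univ.filter fun i => x i = true) := by simp [hx]
    rw [Finset.card_insert_of_notMem hmem, Nat.even_add_one]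

private lemma walsh_univ_eq (x : Fin k → Bool) :
    Walsh (Finset.univ : Finset (Fin k)) x = (-1 : ℝ) ^ (k - PosCount x) := by
  classical
  unfold Walsh
  rw [← Finset.prod_filter_mul_prod_filter_not Finset.univ (fun j => x j = true)]
  have h1 : ∏ j ∈ Finset.univ.filter (fun j => x j = true), (if x j then (1:ℝ) else -1) = 1 :=
    Finset.prod_eq_one fun j hj => by
      simp only [Finset.mem_filter] at hj; simp [hj.2]
  have h2 : ∏ j ∈ Finset.univ.filter (fun j => ¬ x j = true), (if x j then (1:ℝ) else -1)
      = (-1 : ℝ) ^ (Finset.univ.filter fun j => ¬ x j = true).card := by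
    rw [Finset.prod_congr rfl (fun j hj => ?_), Finset.prod_const]
    simp only [Finset.mem_filter] at hj
    simp [hj.2]
  rw [h1, h2, one_mul]
  congr 1
  have := Finset.card_filter_add_card_filter_not
    (s := (Finset.univ : Finset (Fin k))) (p := fun j => x j = true)
  simp only [Finset.card_univ, Fintype.card_fin] at this
  unfold PosCount
  omega

noncomputable def pairFn (i0 : Fin k) (a : Fin k → Bool) : (Fin k → Bool) → ℝ :=
  ∑ L ∈ (Finset.univ.erase i0).powerset, Walsh L a • Walsh L

private lemma pairFn_mem (i0 : Fin k) (a : Fin k → Bool) : pairFn i0 a ∈ BSpace k (k - 1) := by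
  apply Submodule.sum_mem
  intro L hL
  apply Submodule.smul_mem
  apply Submodule.subset_span
  refine ⟨L, ?_, rfl⟩
  have := Finset.card_le_card (Finset.mem_powerset.mp hL)
  rwa [Finset.card_erase_of_mem (Finset.mem_univ i0), Finset.card_univ,
    Fintype.card_fin] at this

private lemma pairFn_eq_prod (i0 : Fin k) (a x : Fin k → Bool) :
    pairFn i0 a x = ∏ j ∈ Finset.univ.erase i0,
      ((if a j then (1:ℝ) else -1) * (if x j then (1:ℝ) else -1) + 1) := by
  rw [Finset.prod_add]
  unfold pairFn
  rw [Finset.sum_apply]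
  refine Finset.sum_congr rfl fun L hL => ?_
  simp only [Pi.smul_apply, smul_eq_mul, Finset.prod_const_one, mul_one]
  unfold Walsh
  rw [← Finset.prod_mul_distrib]

private lemma pairFn_nonneg (i0 : Fin k) (a x : Fin k → Bool) : 0 ≤ pairFn i0 a x := by
  rw [pairFn_eq_prod]
  apply Finset.prod_nonneg
  intro j _
  cases a j <;> cases x j <;> norm_num

private lemma pairFn_self (i0 : Fin k) (a : Fin k → Bool) : pairFn i0 a a = 2 ^ (k - 1) := by
  rw [pairFn_eq_prod]
  have : ∀ j ∈ Finset.univ.erase i0,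
      ((if a j then (1:ℝ) else -1) * (if a j then (1:ℝ) else -1) + 1) = 2 := by
    intro j _; cases a j <;> norm_num
  rw [Finset.prod_congr rfl this, Finset.prod_const,
    Finset.card_erase_of_mem (Finset.mem_univ i0), Finset.card_univ, Fintype.card_fin]

private lemma pairFn_eq_zero (i0 : Fin k) (a x : Fin k → Bool)
    (h1 : x ≠ a) (h2 : x ≠ Function.update a i0 (!a i0)) : pairFn i0 a x = 0 := by
  have : ∃ j, j ≠ i0 ∧ x j ≠ a j := by
    by_contra hc
    push_neg at hc
    have key : x = a ∨ x = Function.update a i0 (!a i0) := by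
      by_cases hx : x i0 = a i0
      · left; funext j
        by_cases hj : j = i0
        · subst hj; exact hx
        · exact hc j hj
      · right; funext j
        by_cases hj : j = i0
        · subst hj
          rw [Function.update_self]
          cases ha : a j <;> cases hxx : x j <;> simp_all
        · rw [Function.update_of_ne hj]; exact hc j hj
    rcases key with h | h
    · exact h1 h
    · exact h2 h
  obtain ⟨j, hj, hja⟩ := this
  rw [pairFn_eq_prod]
  apply Finset.prod_eq_zero (Finset.mem_erase.mpr ⟨hj, Finset.mem_univ j⟩)
  cases ha : a j <;> cases hxx : x j <;> simp_all

private lemma even_uniq (k : ℕ) (hk : 1 ≤ k) :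
    IsUniqSet (BPlus k (k - 1)) { x : Fin k → Bool | Even (PosCount x) } := by
  classical
  rintro φ ⟨hmem, hpos⟩ hvan
  have hsum : ∑ x : Fin k → Bool, φ x * Walsh Finset.univ x = 0 :=
    sum_mul_walsh_univ hk hmem
  rw [← Finset.sum_filter_add_sum_filter_not Finset.univ
    (fun x => Even (PosCount x))] at hsum
  have heven : ∑ x ∈ Finset.univ.filter (fun x => Even (PosCount x)),
      φ x * Walsh Finset.univ x = 0 := by
    refine Finset.sum_eq_zero fun x hx => ?_
    simp only [Finset.mem_filter] at hx
    rw [hvan x hx.2, zero_mul]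
  rw [heven, zero_add] at hsum
  -- on odd points, Walsh univ is the constant (-1)^(k-1)
  have hconst : ∀ x : Fin k → Bool, ¬ Even (PosCount x) →
      Walsh (Finset.univ : Finset (Fin k)) x = (-1 : ℝ) ^ (k - 1) := by
    intro x hx
    rw [walsh_univ_eq]
    have hle : PosCount x ≤ k := by
      unfold PosCount
      have := Finset.card_le_card
        (Finset.subset_univ (Finset.univ.filter fun i => x i = true))
      simpa [Finset.card_univ] using this
    have hpar : Even (k - PosCount x) ↔ Even (k - 1) := by
      rw [Nat.even_sub hle, Nat.even_sub hk]
      simp only [Nat.even_iff] at hx ⊢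
      omega
    rcases Nat.even_or_odd (k - 1) with he | ho
    · rw [he.neg_one_pow, (hpar.mpr he).neg_one_pow]
    · have hno : Odd (k - PosCount x) := by
        rw [Nat.odd_iff]
        rw [Nat.odd_iff] at ho
        simp only [Nat.even_iff] at hpar
        omega
      rw [ho.neg_one_pow, hno.neg_one_pow]
  have hsum2 : (-1 : ℝ) ^ (k - 1) *
      ∑ x ∈ Finset.univ.filter (fun x => ¬ Even (PosCount x)), φ x = 0 := by
    rw [Finset.mul_sum]
    rw [← hsum]
    refine Finset.sum_congr rfl fun x hx => ?_
    simp only [Finset.mem_filter] at hx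
    rw [hconst x hx.2]
    ring
  have hne : ((-1 : ℝ) ^ (k - 1)) ≠ 0 := pow_ne_zero _ (by norm_num)
  have hsum3 : ∑ x ∈ Finset.univ.filter (fun x => ¬ Even (PosCount x)), φ x = 0 :=
    (mul_eq_zero.mp hsum2).resolve_left hne
  have hodd : ∀ x ∈ Finset.univ.filter (fun x => ¬ Even (PosCount x)), φ x = 0 :=
    (Finset.sum_eq_zero_iff_of_nonneg fun x _ => hpos x).mp hsum3
  funext x
  by_cases hx : Even (PosCount x)
  · exact hvan x hx
  · exact hodd x (Finset.mem_filter.mpr ⟨Finset.mem_univ x, hx⟩)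

private lemma uniq_lower (k : ℕ) (hk : 1 ≤ k) (U : Set (Fin k → Bool))
    (hU : IsUniqSet (BPlus k (k - 1)) U) : 2 ^ (k - 1) ≤ U.ncard := by
  classical
  set i0 : Fin k := ⟨0, hk⟩ with hi0
  -- every pair {a, flip a} meets U
  have hpair : ∀ a : Fin k → Bool, ∃ u ∈ U,
      u = a ∨ u = Function.update a i0 (!a i0) := by
    intro a
    by_contra hc
    push_neg at hc
    have hz : pairFn i0 a = 0 := by
      refine hU (pairFn i0 a) ⟨pairFn_mem i0 a, pairFn_nonneg i0 a⟩ fun u hu => ?_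
      obtain ⟨h1, h2⟩ := hc u hu
      exact pairFn_eq_zero i0 a u h1 h2
    have := pairFn_self i0 a
    rw [hz] at this
    simp only [Pi.zero_apply] at this
    have : (0:ℝ) < 2 ^ (k - 1) := by positivity
    simp_all
  choose f hfU hfeq using hpair
  set s : Set (Fin k → Bool) := { x | x i0 = true } with hs
  have hcard : s.ncard = 2 ^ (k - 1) := by
    have : s = ↑(Finset.univ.filter fun x : Fin k → Bool => x i0 = true) := by
      ext x; simp [hs]
    rw [this, Set.ncard_coe_finset]
    exact card_filter_half i0 (fun x => x i0 = true) (fun x => by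
      cases hx : x i0 <;> simp [Function.update_self, hx])
  have hinj : Set.InjOn f s := by
    intro a ha b hb hfab
    have ha' : a i0 = true := ha
    have hb' : b i0 = true := hb
    have hflipa : Function.update a i0 (!a i0) i0 = false := by
      simp [Function.update_self, ha']
    have hflipb : Function.update b i0 (!b i0) i0 = false := by
      simp [Function.update_self, hb']
    rcases hfeq a with h1 | h1 <;> rcases hfeq b with h2 | h2
    · rw [← h1, ← h2, hfab]
    · exfalso
      have heq : a = Function.update b i0 (!b i0) := by rw [← h1, hfab, h2]
      rw [heq, hflipb] at ha'
      exact Bool.false_ne_true ha'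
    · exfalso
      have heq : b = Function.update a i0 (!a i0) := by rw [← h2, ← hfab, h1]
      rw [heq, hflipa] at hb'
      exact Bool.false_ne_true hb'
    · have hupd : Function.update a i0 (!a i0) = Function.update b i0 (!b i0) := by
        rw [← h1, ← h2, hfab]
      funext j
      by_cases hj : j = i0
      · subst hj; rw [ha', hb']
      · have := congrFun hupd j
        rwa [Function.update_of_ne hj, Function.update_of_ne hj] at this
  calc 2 ^ (k - 1) = s.ncard := hcard.symm
    _ ≤ U.ncard := Set.ncard_le_ncard_of_injOn f (fun a ha => hfU a) hinj (Set.toFinite U)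

private lemma even_ncard (k : ℕ) (hk : 1 ≤ k) :
    ({ x : Fin k → Bool | Even (PosCount x) } : Set (Fin k → Bool)).ncard = 2 ^ (k - 1) := by
  classical
  set i0 : Fin k := ⟨0, hk⟩
  have : ({ x : Fin k → Bool | Even (PosCount x) } : Set (Fin k → Bool))
      = ↑(Finset.univ.filter fun x : Fin k → Bool => Even (PosCount x)) := by
    ext x; simp
  rw [this, Set.ncard_coe_finset]
  exact card_filter_half i0 (fun x => Even (PosCount x)) (posCount_flip i0)

end Aux

/-- For `k ≥ 1`, the set of points with an even number of `+1` coordinates is a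
set of uniqueness for `(B^k_{k−1})_+`, every set of uniqueness for `(B^k_{k−1})_+` has
cardinality at least `2^{k−1}`, and `u(k,k−1) = 2^{k−1}`. -/
theorem stmt_9 (k : ℕ) (hk : 1 ≤ k) :
    IsUniqSet (BPlus k (k - 1)) { x : Fin k → Bool | Even (PosCount x) } ∧
      (∀ U : Set (Fin k → Bool), IsUniqSet (BPlus k (k - 1)) U → 2 ^ (k - 1) ≤ U.ncard) ∧
      uMin k (k - 1) = 2 ^ (k - 1) := by
  refine ⟨even_uniq k hk, fun U hU => uniq_lower k hk U hU, ?_⟩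
  have hmem : 2 ^ (k - 1) ∈
      { n | ∃ U : Set (Fin k → Bool), U.ncard = n ∧ IsUniqSet (BPlus k (k - 1)) U } :=
    ⟨{ x : Fin k → Bool | Even (PosCount x) }, even_ncard k hk, even_uniq k hk⟩
  refine le_antisymm (Nat.sInf_le hmem) ?_
  apply le_csInf ⟨_, hmem⟩
  rintro n ⟨U, rfl, hU⟩
  exact uniq_lower k hk U hU
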